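/- For all n ≥ 4 and all indices i, j with 2 ≤ i+1 < j < n, there is no permutation of [n] avoiding both 1324 and 1342 whose first letter is i and whose second letter is j. -/
import Mathlib


/-- The word `w` contains the pattern `p`: some subsequence of `w` is
order-isomorphic to `p`. -/
def ContainsPat (w p : List ℕ) : Prop :=
  ∃ s : List ℕ, s.Sublist w ∧ s.length = p.length ∧
    ∀ i j : ℕ, i < p.length → j < p.length → (s[i]! < s[j]! ↔ p[i]! < p[j]!)

/-- The word `w` avoids the pattern `p`. -/
def AvoidsPat (w p : List ℕ) : Prop := ¬ ContainsPat w p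

/-- `π` is the one-line notation of a permutation of `{1,…,n}`. -/
def IsPermList (n : ℕ) (π : List ℕ) : Prop :=
  π.Perm ((List.range n).map (· + 1))

/-- The number of descents of a word. -/
def descList (π : List ℕ) : ℕ :=
  ((List.range (π.length - 1)).filter (fun t => decide (π[t + 1]! < π[t]!))).length

lemma pair_sublist {a b : ℕ} {l : List ℕ} (ha : a ∈ l) (hb : b ∈ l) (hab : a ≠ b) :
    [a, b].Sublist l ∨ [b, a].Sublist l := by
  induction l with
  | nil => simp at ha
  | cons x t ih =>
    rcases List.mem_cons.1 ha with rfl | ha'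
    · left
      refine List.cons_sublist_cons.2 (List.singleton_sublist.2 ?_)
      rcases List.mem_cons.1 hb with rfl | hb'
      · exact absurd rfl hab
      · exact hb'
    · rcases List.mem_cons.1 hb with rfl | hb'
      · right
        exact List.cons_sublist_cons.2 (List.singleton_sublist.2 ha')
      · rcases ih ha' hb' with h | h
        · exact Or.inl (h.cons x)
        · exact Or.inr (h.cons x)

/-- For `n ≥ 4` and `2 ≤ i+1 < j < n`, no `{1324,1342}`-avoiding permutation of
`[n]` starts `i, j`. -/
theorem stmt9 (n i j : ℕ) (hn : 4 ≤ n) (hi : 1 ≤ i) (hij : i + 1 < j) (hj : j < n) :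
    ¬ ∃ π : List ℕ, IsPermList n π ∧ AvoidsPat π [1,3,2,4] ∧ AvoidsPat π [1,3,4,2] ∧
      π[0]! = i ∧ π[1]! = j := by
  rintro ⟨π, hperm, hav1, hav2, h0, h1⟩
  have hlen : π.length = n := by
    simpa using hperm.length_eq
  have hmem : ∀ m : ℕ, 1 ≤ m → m ≤ n → m ∈ π := by
    intro m hm1 hm2
    rw [hperm.mem_iff, List.mem_map]
    exact ⟨m - 1, by simp [List.mem_range]; omega, by omega⟩
  obtain ⟨x, y, t, rfl⟩ : ∃ x y t, π = x :: y :: t := by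
    rcases π with _ | ⟨x, _ | ⟨y, t⟩⟩
    · simp at hlen; omega
    · simp at hlen; omega
    · exact ⟨_, _, _, rfl⟩
  simp only [List.getElem!_cons_zero, List.getElem!_cons_succ] at h0 h1
  subst h0 h1
  have hmem1 : x + 1 ∈ t := by
    have := hmem (x + 1) (by omega) (by omega)
    simp only [List.mem_cons] at this
    rcases this with h | h | h
    · omega
    · omega
    · exact h
  have hmemn : n ∈ t := by
    have := hmem n (by omega) le_rfl
    simp only [List.mem_cons] at this
    rcases this with h | h | h
    · omega
    · omega
    · exact h
  rcases pair_sublist hmem1 hmemn (by omega) with h | h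
  · apply hav1
    refine ⟨[x, y, x + 1, n], ?_, rfl, ?_⟩
    · exact List.cons_sublist_cons.2 (List.cons_sublist_cons.2 h)
    · intro a b ha hb
      simp only [List.length_cons, List.length_nil] at ha hb
      interval_cases a <;> interval_cases b <;>
        simp only [List.getElem!_cons_zero, List.getElem!_cons_succ] <;> omega
  · apply hav2
    refine ⟨[x, y, n, x + 1], ?_, rfl, ?_⟩
    · exact List.cons_sublist_cons.2 (List.cons_sublist_cons.2 h)
    · intro a b ha hb
      simp only [List.length_cons, List.length_nil] at ha hb
      interval_cases a <;> interval_cases b <;>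
        simp only [List.getElem!_cons_zero, List.getElem!_cons_succ] <;> omega
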